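/- arXiv:math/0312354 — 2 statements merged into one kernel-verified Lean document; each statement's English description precedes it below -/
import Mathlib

section
/- Let k ≥ 2 and b_1,…,b_k ≥ 1 be integers. In the lattice with orthogonal basis l, f_1,…,f_M (with ⟨l,l⟩ = 1, ⟨f_i,f_i⟩ = −1), let γ_1,…,γ_k be elements of the form γ_1 = l + Σ_{j=1}^M a^1_j f_j and γ_i = Σ_{j=1}^M a^i_j f_j for i = 2,…,k, with a^i_j ∈ ℤ, satisfying: ⟨γ_1,γ_1⟩ = 1 − b_1 and ⟨γ_i,γ_i⟩ = −b_i for i = 2,…,k; ⟨γ_i,γ_{i+1}⟩ = 1 for i = 1,…,k−1; ⟨γ_i,γ_j⟩ = 0 whenever |i−j| > 1; and Σ_{j=1}^M (a^i_j + (a^i_j)²) = 2(1 − δ_{1i}) for every i = 1,…,k, where δ_{1i} is the Kronecker delta. Then there exist basis elements e^i_j ∈ {f_1,…,f_M}, with e^i_j ≠ e^i_{j'} whenever j ≠ j' (for the same i), such that γ_1 = l − e^1_1 − e^1_2 − ⋯ − e^1_{b_1} and γ_i = e^i_1 − e^i_2 − ⋯ − e^i_{b_i} for i = 2,…,k. 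-/
/-- The intersection form of `CP² # M C̄P²` on `ℤ^{M+1}`:
`⟨x, y⟩ = x₀·y₀ - Σ_{j=1}^M x_j·y_j`, so that the standard basis is an orthogonal basis
`l, f_1, …, f_M` with `⟨l,l⟩ = 1` and `⟨f_j,f_j⟩ = -1`. -/
def interForm (M : ℕ) (x y : Fin (M + 1) → ℤ) : ℤ :=
  x 0 * y 0 - ∑ j : Fin M, x j.succ * y j.succ

/-- The basis vector `l`. -/
def lvec (M : ℕ) : Fin (M + 1) → ℤ := Pi.single 0 1

/-- The basis vector `f_j`, `j = 1, …, M`. -/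
def fvec (M : ℕ) (j : Fin M) : Fin (M + 1) → ℤ := Pi.single j.succ 1

lemma lvec_zero (M : ℕ) : lvec M 0 = 1 := by simp [lvec]
lemma lvec_succ (M : ℕ) (j : Fin M) : lvec M j.succ = 0 := by
  simp [lvec, Pi.single_apply, Fin.succ_ne_zero]
lemma fvec_zero (M : ℕ) (j : Fin M) : fvec M j 0 = 0 := by
  simp [fvec, Pi.single_apply, (Fin.succ_ne_zero j).symm]
lemma fvec_succ (M : ℕ) (j j' : Fin M) : fvec M j j'.succ = if j' = j then 1 else 0 := by
  simp [fvec, Pi.single_apply, Fin.succ_inj]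

lemma sum_smul_fvec_zero (M : ℕ) (c : Fin M → ℤ) :
    (∑ j : Fin M, c j • fvec M j) 0 = 0 := by
  rw [Finset.sum_apply]; simp [fvec_zero]

lemma sum_smul_fvec_succ (M : ℕ) (c : Fin M → ℤ) (j' : Fin M) :
    (∑ j : Fin M, c j • fvec M j) j'.succ = c j' := by
  rw [Finset.sum_apply]; simp [fvec_succ]


lemma int_self_add_sq_nonneg (n : ℤ) : 0 ≤ n + n^2 := by
  rcases le_or_gt 0 n with h|h
  · nlinarith
  · have h1 : n ≤ -1 := by omega
    nlinarith

lemma int_mem01 (n : ℤ) (h : n + n^2 = 0) : n = 0 ∨ n = -1 := by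
  have h2 : n * (n + 1) = 0 := by ring_nf; linarith [h]
  rcases mul_eq_zero.mp h2 with h3 | h3
  · exact Or.inl h3
  · right; omega


/-- Classes `γ_1, …, γ_k` (here indexed zero-based with `k + 2 ≥ 2` of them), with
`γ_1 = l + Σ_j a^1_j f_j`, `γ_i = Σ_j a^i_j f_j` for `i ≥ 2`, self-intersections
`⟨γ_1,γ_1⟩ = 1 - b_1`, `⟨γ_i,γ_i⟩ = -b_i`, adjacent intersections `1`, distant
intersections `0`, and satisfying the adjunction relations
`Σ_j (a^i_j + (a^i_j)²) = 2(1 - δ_{1i})`, are of the standard form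
`γ_1 = l - e^1_1 - ⋯ - e^1_{b_1}`, `γ_i = e^i_1 - e^i_2 - ⋯ - e^i_{b_i}` for basis
vectors `e^i_j ∈ {f_1, …, f_M}` distinct for distinct `j` and the same `i`. -/
theorem stmt16 (M k : ℕ) (b : Fin (k + 2) → ℕ) (hb : ∀ i, 1 ≤ b i)
    (a : Fin (k + 2) → Fin M → ℤ)
    (γ : Fin (k + 2) → Fin (M + 1) → ℤ)
    (hγ0 : γ 0 = lvec M + ∑ j : Fin M, a 0 j • fvec M j)
    (hγi : ∀ i : Fin (k + 2), i ≠ 0 → γ i = ∑ j : Fin M, a i j • fvec M j)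
    (hself0 : interForm M (γ 0) (γ 0) = 1 - (b 0 : ℤ))
    (hselfi : ∀ i : Fin (k + 2), i ≠ 0 → interForm M (γ i) (γ i) = -(b i : ℤ))
    (hadj : ∀ i i' : Fin (k + 2), ((i : ℕ) + 1 = (i' : ℕ) ∨ (i' : ℕ) + 1 = (i : ℕ)) →
      interForm M (γ i) (γ i') = 1)
    (hfar : ∀ i i' : Fin (k + 2), ((i : ℕ) + 1 < (i' : ℕ) ∨ (i' : ℕ) + 1 < (i : ℕ)) →
      interForm M (γ i) (γ i') = 0)
    (hadjunction : ∀ i : Fin (k + 2),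
      ∑ j : Fin M, (a i j + (a i j) ^ 2) = if i = 0 then 0 else 2) :
    ∃ E : Fin (k + 2) → ℕ → Fin M,
      (∀ i : Fin (k + 2), ∀ j j' : ℕ, j < b i → j' < b i → E i j = E i j' → j = j') ∧
      γ 0 = lvec M - ∑ j ∈ Finset.range (b 0), fvec M (E 0 j) ∧
      ∀ i : Fin (k + 2), i ≠ 0 →
        γ i = fvec M (E i 0) - ∑ j ∈ Finset.Ico 1 (b i), fvec M (E i j) := by
  -- coordinates
  have hcoord : ∀ i : Fin (k+2), ∀ j : Fin M, γ i j.succ = a i j := by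
    intro i j
    by_cases hi : i = 0
    · subst hi; rw [hγ0]; simp [lvec_succ, Finset.sum_apply, fvec_succ]
    · rw [hγi i hi, sum_smul_fvec_succ]
  have hz0 : γ 0 0 = 1 := by rw [hγ0]; simp [lvec_zero, Finset.sum_apply, fvec_zero]
  have hzi : ∀ i : Fin (k+2), i ≠ 0 → γ i 0 = 0 := by
    intro i hi; rw [hγi i hi, sum_smul_fvec_zero]
  -- squares
  have hQ : ∀ i : Fin (k+2), ∑ j : Fin M, (a i j)^2 = (b i : ℤ) := by
    intro i
    by_cases hi : i = 0
    · subst hi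
      have := hself0
      rw [interForm] at this
      simp only [hcoord, hz0] at this
      have h2 : ∀ j : Fin M, a 0 j * a 0 j = (a 0 j)^2 := fun j => (sq (a 0 j)).symm
      simp only [h2] at this
      linarith
    · have := hselfi i hi
      rw [interForm] at this
      simp only [hcoord, hzi i hi] at this
      have h2 : ∀ j : Fin M, a i j * a i j = (a i j)^2 := fun j => (sq (a i j)).symm
      simp only [h2] at this
      linarith
  -- linear sums
  have hS : ∀ i : Fin (k+2), ∑ j : Fin M, a i j = (if i = 0 then 0 else 2) - (b i : ℤ) := by
    intro i
    have h1 := hadjunction i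
    rw [Finset.sum_add_distrib, hQ i] at h1
    linarith [h1]
  -- cross sums
  have hcross : ∀ i i' : Fin (k+2), (i : ℕ) < (i' : ℕ) →
      ∑ j : Fin M, a i j * a i' j = if (i : ℕ) + 1 = (i' : ℕ) then -1 else 0 := by
    intro i i' hlt
    have hi' : i' ≠ 0 := by
      intro h; subst h; simp at hlt
    have hval : γ i 0 * γ i' 0 = 0 := by rw [hzi i' hi', mul_zero]
    by_cases hc : (i : ℕ) + 1 = (i' : ℕ)
    · have := hadj i i' (Or.inl hc)
      rw [interForm, hval] at this
      simp only [hcoord] at this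
      rw [if_pos hc]; linarith
    · have := hfar i i' (Or.inl (lt_of_le_of_ne hlt hc))
      rw [interForm, hval] at this
      simp only [hcoord] at this
      rw [if_neg hc]; linarith

  -- extended sequences
  set a' : ℕ → Fin M → ℤ := fun m j => if h : m < k+2 then a ⟨m,h⟩ j else 0 with ha'
  set b' : ℕ → ℤ := fun m => if h : m < k+2 then (b ⟨m,h⟩ : ℤ) else 0 with hb'
  set C : ℕ → Fin M → ℤ := fun e j => ∑ m ∈ Finset.range (e+1), a' m j with hC
  have ha'eq : ∀ (m : ℕ) (h : m < k+2) (j : Fin M), a' m j = a ⟨m,h⟩ j := by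
    intro m h j; simp [ha', dif_pos h]
  have hb'eq : ∀ (m : ℕ) (h : m < k+2), b' m = (b ⟨m,h⟩ : ℤ) := by
    intro m h; simp [hb', dif_pos h]
  have hCkey : ∀ e, e < k+2 →
      (∑ j : Fin M, C e j = 2*(e:ℤ) - ∑ m ∈ Finset.range (e+1), b' m) ∧
      (∑ j : Fin M, (C e j)^2 = (∑ m ∈ Finset.range (e+1), b' m) - 2*(e:ℤ)) := by
    intro e
    induction e with
    | zero =>
      intro h0
      have hz : (⟨0, h0⟩ : Fin (k+2)) = 0 := rfl
      have hC0 : ∀ j, C 0 j = a 0 j := by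
        intro j
        show ∑ m ∈ Finset.range (0+1), a' m j = a 0 j
        rw [Finset.sum_range_succ, Finset.sum_range_zero, zero_add, ha'eq 0 h0, hz]
      have hB0 : ∑ m ∈ Finset.range 1, b' m = (b 0 : ℤ) := by
        rw [Finset.sum_range_one, hb'eq 0 h0, hz]
      constructor
      · rw [Finset.sum_congr rfl (fun j _ => hC0 j), hS 0, hB0]; simp
      · rw [Finset.sum_congr rfl (fun j _ => by rw [hC0 j]), hQ 0, hB0]; simp
    | succ e ih =>
      intro he1
      have he : e < k+2 := by omega
      obtain ⟨ih1, ih2⟩ := ih he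
      have hCstep : ∀ j, C (e+1) j = C e j + a' (e+1) j := by
        intro j; simp only [hC]; rw [Finset.sum_range_succ]
      have hne : (⟨e+1, he1⟩ : Fin (k+2)) ≠ 0 := by
        intro h; have := congrArg Fin.val h; simp at this
      -- sum of a' (e+1)
      have hsum1 : ∑ j : Fin M, a' (e+1) j = 2 - b' (e+1) := by
        rw [Finset.sum_congr rfl (fun j _ => ha'eq (e+1) he1 j), hS ⟨e+1, he1⟩,
          if_neg hne, hb'eq (e+1) he1]
      have hsum2 : ∑ j : Fin M, (a' (e+1) j)^2 = b' (e+1) := by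
        rw [Finset.sum_congr rfl (fun j _ => by rw [ha'eq (e+1) he1 j]), hQ ⟨e+1, he1⟩,
          hb'eq (e+1) he1]
      have hsumC : ∑ j : Fin M, C e j * a' (e+1) j = -1 := by
        have hswap : ∑ j : Fin M, C e j * a' (e+1) j
            = ∑ m ∈ Finset.range (e+1), ∑ j : Fin M, a' m j * a' (e+1) j := by
          rw [Finset.sum_comm]
          apply Finset.sum_congr rfl
          intro j _
          simp only [hC, Finset.sum_mul]
        rw [hswap]
        have hterm : ∀ m ∈ Finset.range (e+1),
            ∑ j : Fin M, a' m j * a' (e+1) j = if m = e then -1 else 0 := by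
          intro m hm
          have hmlt : m < e+1 := Finset.mem_range.mp hm
          have hmk : m < k+2 := by omega
          rw [Finset.sum_congr rfl (fun j _ => by rw [ha'eq m hmk j, ha'eq (e+1) he1 j])]
          rw [hcross ⟨m, hmk⟩ ⟨e+1, he1⟩ (by simpa using hmlt)]
          by_cases hme : m = e
          · rw [if_pos (by simp [hme]), if_pos hme]
          · rw [if_neg (by simp; omega), if_neg hme]
        rw [Finset.sum_congr rfl hterm]
        simp
      have hBs : ∑ m ∈ Finset.range (e+1+1), b' m
          = (∑ m ∈ Finset.range (e+1), b' m) + b' (e+1) := Finset.sum_range_succ _ _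
      constructor
      · rw [Finset.sum_congr rfl (fun j _ => hCstep j), Finset.sum_add_distrib, ih1,
          hsum1, hBs]
        push_cast; ring
      · have hexp : ∀ j : Fin M, (C (e+1) j)^2
            = (C e j)^2 + 2*(C e j * a' (e+1) j) + (a' (e+1) j)^2 := by
          intro j; rw [hCstep j]; ring
        rw [Finset.sum_congr rfl (fun j _ => hexp j), Finset.sum_add_distrib,
          Finset.sum_add_distrib, ih2, hsum2, ← Finset.mul_sum, hsumC, hBs]
        push_cast; ring
  have hC0' : ∀ j, C 0 j = a 0 j := by
    intro j
    show ∑ m ∈ Finset.range (0+1), a' m j = a 0 j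
    rw [Finset.sum_range_succ, Finset.sum_range_zero, zero_add, ha'eq 0 (by omega)]
    rfl
  have hC01 : ∀ e, e < k+2 → ∀ j, C e j = 0 ∨ C e j = -1 := by
    intro e he j
    obtain ⟨h1, h2⟩ := hCkey e he
    have hsum0 : ∑ j : Fin M, (C e j + (C e j)^2) = 0 := by
      rw [Finset.sum_add_distrib, h1, h2]; ring
    have hterm : C e j + (C e j)^2 = 0 :=
      (Finset.sum_eq_zero_iff_of_nonneg
        (fun x _ => int_self_add_sq_nonneg _)).mp hsum0 j (Finset.mem_univ j)
    exact int_mem01 _ hterm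
  have ha01 : ∀ j : Fin M, a 0 j = 0 ∨ a 0 j = -1 := by
    intro j
    have h := hC01 0 (by omega) j
    rwa [hC0' j] at h
  have haval : ∀ (i : Fin (k+2)), i ≠ 0 → ∀ j, a i j = 1 ∨ a i j = 0 ∨ a i j = -1 := by
    intro i hi j
    have hvne : (i : ℕ) ≠ 0 := fun h => hi (Fin.ext h)
    obtain ⟨e, he⟩ : ∃ e, (i : ℕ) = e + 1 := ⟨(i : ℕ) - 1, by omega⟩
    have he1 : e + 1 < k + 2 := he ▸ i.isLt
    have hstep : C (e+1) j = C e j + a i j := by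
      show (∑ m ∈ Finset.range (e+1+1), a' m j) = _
      rw [Finset.sum_range_succ]
      congr 1
      rw [ha'eq (e+1) he1]
      congr 1
      exact Fin.ext he.symm
    have h1 := hC01 (e+1) he1 j
    have h2 := hC01 e (by omega) j
    rw [hstep] at h1
    omega
  classical
  -- counting lemmas
  have hPcard : ∀ i : Fin (k+2), i ≠ 0 →
      (Finset.univ.filter (fun j => a i j = 1)).card = 1 := by
    intro i hi
    have h1 := hadjunction i
    rw [if_neg hi] at h1
    have hterm : ∀ j : Fin M, a i j + (a i j)^2 = if a i j = 1 then 2 else 0 := by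
      intro j; rcases haval i hi j with h|h|h <;> simp [h]
    rw [Finset.sum_congr rfl (fun j _ => hterm j), ← Finset.sum_filter,
      Finset.sum_const, nsmul_eq_mul] at h1
    omega
  have hN0card : (Finset.univ.filter (fun j => a 0 j = -1)).card = b 0 := by
    have h1 := hQ 0
    have hterm : ∀ j : Fin M, (a 0 j)^2 = if a 0 j = -1 then 1 else 0 := by
      intro j; rcases ha01 j with h|h <;> simp [h]
    rw [Finset.sum_congr rfl (fun j _ => hterm j), ← Finset.sum_filter,
      Finset.sum_const, nsmul_eq_mul, mul_one] at h1
    exact_mod_cast h1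
  have hNicard : ∀ i : Fin (k+2), i ≠ 0 →
      (Finset.univ.filter (fun j => a i j = -1)).card = b i - 1 := by
    intro i hi
    have h1 := hQ i
    have hterm : ∀ j : Fin M, (a i j)^2
        = (if a i j = 1 then 1 else 0) + (if a i j = -1 then 1 else 0) := by
      intro j; rcases haval i hi j with h|h|h <;> norm_num [h]
    rw [Finset.sum_congr rfl (fun j _ => hterm j), Finset.sum_add_distrib,
      ← Finset.sum_filter, ← Finset.sum_filter, Finset.sum_const, Finset.sum_const,
      nsmul_eq_mul, nsmul_eq_mul, mul_one, mul_one, hPcard i hi] at h1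
    have hb1 := hb i
    omega
  -- a junk element of Fin M
  obtain ⟨w, hw⟩ : (Finset.univ.filter (fun j => a 0 j = -1)).Nonempty :=
    Finset.card_pos.mp (by rw [hN0card]; exact hb 0)
  -- the +1 positions
  have hyex : ∀ i : Fin (k+2), ∃ yv : Fin M,
      i ≠ 0 → Finset.univ.filter (fun j => a i j = 1) = {yv} := by
    intro i
    by_cases hi : i = 0
    · exact ⟨w, fun h => absurd hi h⟩
    · obtain ⟨yv, hyv⟩ := Finset.card_eq_one.mp (hPcard i hi)
      exact ⟨yv, fun _ => hyv⟩
  choose y hy using hyex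
  have hya : ∀ i : Fin (k+2), i ≠ 0 → a i (y i) = 1 := by
    intro i hi
    have : y i ∈ Finset.univ.filter (fun j => a i j = 1) := by
      rw [hy i hi]; exact Finset.mem_singleton_self _
    simpa using this
  -- the enumeration of the -1 positions
  set enum : Fin (k+2) → ℕ → Fin M := fun i n =>
    if h : n < (Finset.univ.filter (fun j => a i j = -1)).card then
      (Finset.univ.filter (fun j => a i j = -1)).orderEmbOfFin rfl ⟨n, h⟩ else w
    with henum
  have henum_mem : ∀ (i : Fin (k+2)) (n : ℕ)
      (h : n < (Finset.univ.filter (fun j => a i j = -1)).card),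
      a i (enum i n) = -1 := by
    intro i n h
    have : enum i n ∈ Finset.univ.filter (fun j => a i j = -1) := by
      rw [henum]; simp only [dif_pos h]
      exact Finset.orderEmbOfFin_mem _ _ _
    simpa using this
  have henum_inj : ∀ (i : Fin (k+2)) (n n' : ℕ)
      (h : n < (Finset.univ.filter (fun j => a i j = -1)).card)
      (h' : n' < (Finset.univ.filter (fun j => a i j = -1)).card),
      enum i n = enum i n' → n = n' := by
    intro i n n' h h' heq
    rw [henum] at heq; simp only [dif_pos h, dif_pos h'] at heq
    have := (Finset.orderEmbOfFin (Finset.univ.filter (fun j => a i j = -1))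
      rfl).injective heq
    exact congrArg Fin.val this
  have henum_surj : ∀ (i : Fin (k+2)) (x : Fin M), a i x = -1 →
      ∃ n, ∃ (h : n < (Finset.univ.filter (fun j => a i j = -1)).card),
        enum i n = x := by
    intro i x hx
    have hxm : x ∈ Finset.univ.filter (fun j => a i j = -1) := by simpa using hx
    have : x ∈ Set.range (Finset.orderEmbOfFin
        (Finset.univ.filter (fun j => a i j = -1)) rfl) := by
      rw [Finset.range_orderEmbOfFin]; exact_mod_cast hxm
    obtain ⟨m, hm⟩ := this
    exact ⟨m.val, m.isLt, by rw [henum]; simp only [dif_pos m.isLt, Fin.eta]; exact hm⟩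
  -- the function E
  refine ⟨fun i n => if i = 0 then enum 0 n else if n = 0 then y i else enum i (n-1),
    ?_, ?_, ?_⟩
  · -- injectivity
    intro i j j' hj hj' heq
    by_cases hi : i = 0
    · subst hi
      simp only [if_pos rfl] at heq
      rw [← hN0card] at hj hj'
      exact henum_inj 0 j j' hj hj' heq
    · simp only [if_neg hi] at heq
      have hcard := hNicard i hi
      rcases Nat.eq_zero_or_pos j with hj0 | hj0 <;>
        rcases Nat.eq_zero_or_pos j' with hj'0 | hj'0
      · omega
      · exfalso
        rw [if_pos hj0, if_neg (by omega)] at heq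
        have h1 : j' - 1 < (Finset.univ.filter (fun j => a i j = -1)).card := by omega
        have := henum_mem i (j'-1) h1
        rw [← heq, hya i hi] at this
        omega
      · exfalso
        rw [if_neg (by omega), if_pos hj'0] at heq
        have h1 : j - 1 < (Finset.univ.filter (fun j => a i j = -1)).card := by omega
        have := henum_mem i (j-1) h1
        rw [heq, hya i hi] at this
        omega
      · rw [if_neg (by omega), if_neg (by omega)] at heq
        have h1 : j - 1 < (Finset.univ.filter (fun j => a i j = -1)).card := by omega
        have h2 : j' - 1 < (Finset.univ.filter (fun j => a i j = -1)).card := by omega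
        have := henum_inj i (j-1) (j'-1) h1 h2 heq
        omega
  · -- γ 0
    have hreindex : ∑ n ∈ Finset.range (b 0),
        fvec M (if (0 : Fin (k+2)) = 0 then enum 0 n else if n = 0 then y 0 else enum 0 (n-1))
        = ∑ j ∈ Finset.univ.filter (fun j => a 0 j = -1), fvec M j := by
      apply Finset.sum_bij (i := fun n _ => enum 0 n)
      · intro n hn
        have hn' : n < (Finset.univ.filter (fun j => a 0 j = -1)).card := by
          rw [hN0card]; exact Finset.mem_range.mp hn
        simpa using henum_mem 0 n hn'
      · intro n hn n' hn' heq
        exact henum_inj 0 n n'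
          (by rw [hN0card]; exact Finset.mem_range.mp hn)
          (by rw [hN0card]; exact Finset.mem_range.mp hn') heq
      · intro x hx
        obtain ⟨n, hn, hnx⟩ := henum_surj 0 x (by simpa using hx)
        exact ⟨n, Finset.mem_range.mpr (by rw [← hN0card]; exact hn), hnx⟩
      · intro n hn
        rw [if_pos rfl]
    rw [hreindex, hγ0]
    have hsplit : ∑ j : Fin M, a 0 j • fvec M j
        = -∑ j ∈ Finset.univ.filter (fun j => a 0 j = -1), fvec M j := by
      rw [← Finset.sum_neg_distrib]
      rw [← Finset.sum_subset (Finset.subset_univ _) (fun x _ hx => by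
        have : a 0 x = 0 := by
          rcases ha01 x with h|h
          · exact h
          · exact absurd (Finset.mem_filter.mpr ⟨Finset.mem_univ x, h⟩) hx
        rw [this, zero_smul])]
      apply Finset.sum_congr rfl
      intro j hj
      have : a 0 j = -1 := by simpa using hj
      rw [this, neg_smul, one_smul]
    rw [hsplit]
    abel
  · -- γ i, i ≠ 0
    intro i hi
    have hcard := hNicard i hi
    simp only [if_neg hi, reduceIte]
    have hreindex : ∑ n ∈ Finset.Ico 1 (b i),
        fvec M (if n = 0 then y i else enum i (n-1))
        = ∑ j ∈ Finset.univ.filter (fun j => a i j = -1), fvec M j := by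
      apply Finset.sum_bij (i := fun n _ => enum i (n-1))
      · intro n hn
        obtain ⟨hn1, hn2⟩ := Finset.mem_Ico.mp hn
        have hn' : n - 1 < (Finset.univ.filter (fun j => a i j = -1)).card := by omega
        simpa using henum_mem i (n-1) hn'
      · intro n hn n' hn' heq
        obtain ⟨h1, h2⟩ := Finset.mem_Ico.mp hn
        obtain ⟨h1', h2'⟩ := Finset.mem_Ico.mp hn'
        have := henum_inj i (n-1) (n'-1) (by omega) (by omega) heq
        omega
      · intro x hx
        obtain ⟨n, hn, hnx⟩ := henum_surj i x (by simpa using hx)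
        refine ⟨n+1, Finset.mem_Ico.mpr ⟨by omega, by omega⟩, by simpa using hnx⟩
      · intro n hn
        obtain ⟨h1, h2⟩ := Finset.mem_Ico.mp hn
        rw [if_neg (by omega : ¬ n = 0)]
    rw [hreindex, hγi i hi]
    have hyN : y i ∉ Finset.univ.filter (fun j => a i j = -1) := by
      simp [hya i hi]
    have hsplit : ∑ j : Fin M, a i j • fvec M j
        = fvec M (y i) - ∑ j ∈ Finset.univ.filter (fun j => a i j = -1), fvec M j := by
      rw [← Finset.sum_subset
        (Finset.subset_univ (insert (y i) (Finset.univ.filter (fun j => a i j = -1))))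
        (fun x _ hx => by
          have hx1 : x ≠ y i := fun h => hx (h ▸ Finset.mem_insert_self _ _)
          have hx2 : a i x ≠ -1 := fun h => hx (Finset.mem_insert_of_mem (by simpa using h))
          have hx3 : a i x ≠ 1 := by
            intro h
            have : x ∈ Finset.univ.filter (fun j => a i j = 1) := by simpa using h
            rw [hy i hi] at this
            exact hx1 (Finset.mem_singleton.mp this)
          have : a i x = 0 := by rcases haval i hi x with h|h|h <;> first | exact h | omega | tauto
          rw [this, zero_smul])]
      rw [Finset.sum_insert hyN, hya i hi, one_smul, sub_eq_add_neg]
      congr 1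
      rw [← Finset.sum_neg_distrib]
      apply Finset.sum_congr rfl
      intro j hj
      have : a i j = -1 := by simpa using hj
      rw [this, neg_smul, one_smul]
    rw [hsplit]
end

section
/- Let p > q ≥ 1 be coprime integers with p/(p−q) = [b_1,…,b_k], b_1,…,b_k ≥ 2. Suppose there exists (n_1,…,n_k) ∈ Z_{p,q} with exactly one index j such that n_j = 1, and with b_i = n_i for every i ≠ j and b_j = 2. Then there exist coprime positive integers m and h such that p = m² and q = mh − 1. -/
/-- The continued fraction `[n_1, …, n_k] = n_1 - 1/(n_2 - 1/(… - 1/n_k))`,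
computed by the backwards recursion `t_k = n_k`, `t_i = n_i - 1/t_{i+1}`. -/
def cf : List ℚ → ℚ
  | [] => 0
  | [a] => a
  | a :: b :: l => a - 1 / cf (b :: l)

/-- The continued fraction of a tuple of integers. -/
def cfI (l : List ℤ) : ℚ := cf (l.map (fun n => (n : ℚ)))

/-- A tuple is admissible if every denominator `t_i`, `i = 2, …, k`, appearing in the
backwards recursion computing the continued fraction is positive, i.e. the continued
fraction of every nonempty proper suffix is positive. -/
def Admissible (l : List ℤ) : Prop :=
  ∀ t : List ℤ, t ≠ [] → t ≠ l → t <:+ l → 0 < cfI t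

/-- Given the tuple `b = (b_1, …, b_k)` with `p/(p-q) = [b_1, …, b_k]`, the set
`Z_{p,q}` consists of the admissible `k`-tuples `(n_1, …, n_k)` of non-negative
integers with `[n_1, …, n_k] = 0` and `0 ≤ n_i ≤ b_i` for all `i`. -/
def Zset (b : List ℤ) : Set (List ℤ) :=
  {n | Admissible n ∧ cfI n = 0 ∧ List.Forall₂ (fun x y => 0 ≤ x ∧ x ≤ y) n b}

/-- first column of the product of matrices [[a,-1],[1,0]] : (numerator, denominator). -/
def col1 : List ℤ → ℤ × ℤ
  | [] => (1, 0)
  | a :: l => (a * (col1 l).1 - (col1 l).2, (col1 l).1)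

/-- second column. -/
def col2 : List ℤ → ℤ × ℤ
  | [] => (0, 1)
  | a :: l => (a * (col2 l).1 - (col2 l).2, (col2 l).1)

lemma cfI_cons_cons (a b : ℤ) (l : List ℤ) :
    cfI (a :: b :: l) = (a : ℚ) - 1 / cfI (b :: l) := rfl

lemma cfI_singleton (a : ℤ) : cfI [a] = (a : ℚ) := rfl

lemma col_det : ∀ l : List ℤ, (col1 l).1 * (col2 l).2 - (col2 l).1 * (col1 l).2 = 1
  | [] => by simp [col1, col2]
  | a :: l => by
    have := col_det l
    simp only [col1, col2]
    ring_nf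
    linarith [col_det l]

lemma col1_append (l₁ l₂ : List ℤ) :
    col1 (l₁ ++ l₂) = ((col1 l₁).1 * (col1 l₂).1 + (col2 l₁).1 * (col1 l₂).2,
      (col1 l₁).2 * (col1 l₂).1 + (col2 l₁).2 * (col1 l₂).2) := by
  induction l₁ with
  | nil => simp [col1, col2]
  | cons a l ih =>
    simp only [List.cons_append, List.append_eq, col1, col2, ih, Prod.mk.injEq]
    exact ⟨by ring, trivial⟩

lemma col1_size : ∀ (l : List ℤ), (∀ x ∈ l, 2 ≤ x) →
    (col1 l).2 < (col1 l).1 ∧ 0 ≤ (col1 l).2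
  | [], _ => by simp [col1]
  | a :: l, h => by
    have ha : 2 ≤ a := h a (by simp)
    obtain ⟨h1, h2⟩ := col1_size l (fun x hx => h x (by simp [hx]))
    simp only [col1]
    constructor <;> nlinarith

lemma cfI_gt_one : ∀ (l : List ℤ), l ≠ [] → (∀ x ∈ l, 2 ≤ x) → 1 < cfI l
  | [], h, _ => absurd rfl h
  | [a], _, h => by
    have : 2 ≤ a := h a (by simp)
    rw [cfI_singleton]
    exact_mod_cast by linarith
  | a :: b :: l, _, h => by
    have ha : 2 ≤ a := h a (by simp)
    have ht : 1 < cfI (b :: l) := cfI_gt_one (b :: l) (by simp) (fun x hx => h x (by simp at hx ⊢; tauto))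
    rw [cfI_cons_cons]
    have h0 : 0 < cfI (b :: l) := by linarith
    have : 1 / cfI (b :: l) < 1 := by
      rw [div_lt_one h0]; exact ht
    have : (2:ℚ) ≤ (a:ℚ) := by exact_mod_cast ha
    have hpos : 0 < 1 / cfI (b :: l) := by positivity
    linarith

lemma cfI_eq_col : ∀ (l : List ℤ), l ≠ [] →
    (∀ t : List ℤ, t ≠ [] → t ≠ l → t <:+ l → 0 < cfI t) →
    0 < (col1 l).2 ∧ cfI l = ((col1 l).1 : ℚ) / ((col1 l).2 : ℚ)
  | [], h, _ => absurd rfl h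
  | [a], _, _ => by simp [col1, cfI_singleton]
  | a :: b :: l, _, H => by
    have hsuf : (b :: l) <:+ (a :: b :: l) := ⟨[a], rfl⟩
    have hlen : ∀ t : List ℤ, t <:+ (b :: l) → t ≠ (a :: b :: l) := by
      intro t ht heq
      have h1 := ht.length_le
      rw [heq] at h1
      simp only [List.length_cons] at h1
      omega
    have hpos : 0 < cfI (b :: l) := H _ (by simp) (hlen _ (List.suffix_refl _)) hsuf
    obtain ⟨hde, heq⟩ := cfI_eq_col (b :: l) (by simp)
      (fun t ht htne hts => H t ht (hlen t hts) (hts.trans hsuf))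
    have hdeQ : (0:ℚ) < ((col1 (b :: l)).2 : ℚ) := by exact_mod_cast hde
    have hnu : (0:ℚ) < ((col1 (b :: l)).1 : ℚ) := by
      rw [heq] at hpos
      exact (div_pos_iff_of_pos_right hdeQ).mp hpos
    have hnuZ : 0 < (col1 (b :: l)).1 := by exact_mod_cast hnu
    constructor
    · simpa [col1] using hnuZ
    · have hN : ((col1 (b :: l)).1 : ℚ) ≠ 0 := ne_of_gt hnu
      have hD : ((col1 (b :: l)).2 : ℚ) ≠ 0 := ne_of_gt hdeQ
      rw [cfI_cons_cons, heq, one_div_div]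
      rw [show col1 (a :: b :: l) = (a * (col1 (b :: l)).1 - (col1 (b :: l)).2, (col1 (b :: l)).1) from rfl]
      push_cast
      field_simp

/-- Let `p > q ≥ 1` be coprime with `p/(p-q) = [b_1, …, b_k]`, all `b_i ≥ 2`.  Suppose
there is `(n_1, …, n_k) ∈ Z_{p,q}` with exactly one index `j` with `n_j = 1`, and with
`b_i = n_i` for all `i ≠ j` and `b_j = 2` (i.e. `b` is obtained from `n` by replacing
the entry `n_j = 1` with `2`).  Then `p = m²` and `q = m·h - 1` for some coprime
positive integers `m` and `h`. -/
theorem stmt17 (p q : ℤ) (hq : 1 ≤ q) (hqp : q < p) (hcop : IsCoprime p q)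
    (b : List ℤ) (hb : ∀ x ∈ b, 2 ≤ x) (hbcf : cfI b = (p : ℚ) / ((p : ℚ) - (q : ℚ)))
    (n : List ℤ) (hn : n ∈ Zset b)
    (j : Fin n.length) (hj : n.get j = 1)
    (huniq : ∀ i : Fin n.length, n.get i = 1 → i = j)
    (hbn : b = n.set (j : ℕ) 2) :
    ∃ m h : ℤ, 0 < m ∧ 0 < h ∧ IsCoprime m h ∧ p = m ^ 2 ∧ q = m * h - 1 := by
  obtain ⟨hadm, hcf0, -⟩ := hn
  have hjlt : (j : ℕ) < n.length := j.2
  set A := n.take (j : ℕ) with hA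
  set C := n.drop ((j : ℕ) + 1) with hC
  have hnAC : n = A ++ 1 :: C := by
    conv_lhs => rw [← List.take_append_drop (j : ℕ) n]
    rw [List.drop_eq_getElem_cons hjlt]
    rw [show n[(j : ℕ)] = 1 from by rw [← List.get_eq_getElem]; exact hj]
  have hbAC : b = A ++ 2 :: C := by
    rw [hbn, List.set_eq_take_cons_drop 2 hjlt]
  have hA2 : ∀ x ∈ A, 2 ≤ x := fun x hx => hb x (by rw [hbAC]; simp [hx])
  have hC2 : ∀ x ∈ C, 2 ≤ x := fun x hx => hb x (by rw [hbAC]; simp [hx])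
  -- notation
  set P := (col1 A).1 with hP
  set Q := (col1 A).2 with hQ
  set P' := (col2 A).1 with hP'
  set Q' := (col2 A).2 with hQ'
  set G := (col1 C).1 with hG
  set D := (col1 C).2 with hD
  have hdetA : P * Q' - P' * Q = 1 := col_det A
  have hdetC : G * (col2 C).2 - (col2 C).1 * D = 1 := col_det C
  obtain ⟨hszA1, hszA2⟩ := col1_size A hA2
  obtain ⟨hszC1, hszC2⟩ := col1_size C hC2
  -- numerator of n is zero
  have hnne : n ≠ [] := by rw [hnAC]; simp
  obtain ⟨hdn, hen⟩ := cfI_eq_col n hnne hadm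
  have hnun : (col1 n).1 = 0 := by
    rw [hcf0] at hen
    have hdnQ : ((col1 n).2 : ℚ) ≠ 0 := by exact_mod_cast hdn.ne'
    field_simp at hen
    exact_mod_cast (by linarith [hen] : ((col1 n).1 : ℚ) = 0)
  -- identification of (col1 b) with (p, p - q)
  have hbne : b ≠ [] := by rw [hbAC]; simp
  obtain ⟨hdb, heb⟩ := cfI_eq_col b hbne (fun t ht _ hts =>
    lt_trans zero_lt_one (cfI_gt_one t ht (fun x hx => hb x (hts.subset hx))))
  have hpq0 : (0:ℤ) < p - q := by omega
  have hp0 : (0:ℤ) < p := by omega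
  obtain ⟨hszB1, hszB2⟩ := col1_size b hb
  have hcross : (col1 b).1 * (p - q) = p * (col1 b).2 := by
    rw [heb] at hbcf
    have h1 : ((col1 b).2 : ℚ) ≠ 0 := by exact_mod_cast hdb.ne'
    have h2 : ((p:ℚ) - q) ≠ 0 := by exact_mod_cast hpq0.ne'
    field_simp at hbcf
    exact_mod_cast (by linarith [hbcf] : ((col1 b).1 : ℚ) * ((p : ℚ) - q) = p * (col1 b).2)
  have hcop2 : IsCoprime p (p - q) := by
    have h := (hcop.neg_right).add_mul_left_right 1
    rwa [show -q + p * 1 = p - q by ring] at h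
  have hcopb : IsCoprime (col1 b).1 (col1 b).2 :=
    ⟨(col2 b).2, -(col2 b).1, by linear_combination col_det b⟩
  have hnub : (col1 b).1 = p := by
    refine Int.dvd_antisymm (by omega) (by omega) ?_ ?_
    · exact hcopb.dvd_of_dvd_mul_right ⟨p - q, by linear_combination -hcross⟩
    · exact hcop2.dvd_of_dvd_mul_right ⟨(col1 b).2, by linear_combination hcross⟩
  have hdeb : (col1 b).2 = p - q := by
    rw [hnub] at hcross
    exact (mul_left_cancel₀ hp0.ne' hcross).symm
  -- expand via append formulas
  have e1 : P * (1 * G - D) + P' * G = 0 := by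
    have h := col1_append A (1 :: C)
    rw [← hnAC] at h
    have := congrArg Prod.fst h
    simp only [col1] at this
    rw [hnun] at this
    linear_combination -this
  have e2 : P * (2 * G - D) + P' * G = p := by
    have h := col1_append A (2 :: C)
    rw [← hbAC] at h
    have := congrArg Prod.fst h
    simp only [col1] at this
    rw [hnub] at this
    linear_combination -this
  have e3 : Q * (2 * G - D) + Q' * G = p - q := by
    have h := col1_append A (2 :: C)
    rw [← hbAC] at h
    have := congrArg Prod.snd h
    simp only [col1] at this
    rw [hdeb] at this
    linear_combination -this
  have hpPG : p = P * G := by linear_combination e1 - e2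
  have hP0 : 0 < P := by omega
  have hG0 : 0 < G := by omega
  -- P = G
  have hcopPP' : IsCoprime P (P + P') := ⟨Q' + Q, -Q, by linear_combination hdetA⟩
  have hcopGD : IsCoprime G D := ⟨(col2 C).2, -(col2 C).1, by linear_combination hdetC⟩
  have hPG : P = G := by
    refine Int.dvd_antisymm (by omega) (by omega) ?_ ?_
    · exact hcopPP'.dvd_of_dvd_mul_right ⟨D, by linear_combination e1⟩
    · exact hcopGD.dvd_of_dvd_mul_right ⟨P + P', by linear_combination -e1⟩
  have hDval : D = P + P' := by
    have h0 : P * (P + P' - D) = 0 := by linear_combination e1 + (P + P') * hPG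
    rcases mul_eq_zero.mp h0 with h | h
    · omega
    · omega
  have hq_eq : p - q = P * Q + 1 := by
    linear_combination -e3 - (2 * Q + Q') * hPG - Q * hDval + hdetA
  refine ⟨P, P - Q, hP0, by omega, ⟨Q' - P', P', by linear_combination hdetA⟩, ?_, ?_⟩
  · rw [hpPG, hPG]; ring
  · have : p = P * P := by rw [hpPG, hPG]
    linear_combination this - hq_eq
end
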